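/- arXiv:1204.1668 — 5 statements merged into one kernel-verified Lean document; each statement's English description precedes it below -/
import Mathlib

section
/- Let G and H be finite groups with gcd(|G|,|H|) = 1, and let K be a subgroup of G × H. Then there exist subgroups G' ≤ G and H' ≤ H such that K = G' × H' (i.e., K equals Subgroup.prod G' H'). -/
theorem subgroup_of_coprime_prod (G H : Type*) [Group G] [Group H] [Finite G] [Finite H]
    (hcop : Nat.Coprime (Nat.card G) (Nat.card H)) (K : Subgroup (G × H)) :
    ∃ (G' : Subgroup G) (H' : Subgroup H), K = G'.prod H' := by
  have key1 : ∀ g h, (g, h) ∈ K → ((g, 1) : G × H) ∈ K := by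
    intro g h hk
    obtain ⟨u, v, huv⟩ : ∃ u v : ℤ, (Nat.card G) * u + (Nat.card H) * v = 1 := by
      have : IsCoprime ((Nat.card G : ℤ)) ((Nat.card H : ℤ)) := by
        rw [Int.isCoprime_iff_gcd_eq_one]
        exact_mod_cast hcop
      obtain ⟨a, b, hab⟩ := this
      exact ⟨a, b, by linarith [hab]⟩
    have h1 : ((g, h) : G × H) ^ ((Nat.card H : ℤ) * v) ∈ K := zpow_mem hk _
    have hg : g ^ ((Nat.card H : ℤ) * v) = g := by
      conv_rhs => rw [← zpow_one g, ← huv]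
      rw [zpow_add, mul_comm ((Nat.card G : ℤ)) u, zpow_mul, zpow_natCast,
        zpow_mul g u, zpow_natCast, pow_card_eq_one', one_mul]
    have hh : h ^ ((Nat.card H : ℤ) * v) = 1 := by
      rw [zpow_mul, zpow_natCast, pow_card_eq_one', one_zpow]
    simpa [Prod.pow_mk, hg, hh] using h1
  have key2 : ∀ g h, (g, h) ∈ K → ((1, h) : G × H) ∈ K := by
    intro g h hk
    have := mul_mem (inv_mem (key1 g h hk)) hk
    simpa using this
  refine ⟨K.map (MonoidHom.fst G H), K.map (MonoidHom.snd G H), ?_⟩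
  ext ⟨g, h⟩
  simp only [Subgroup.mem_prod, Subgroup.mem_map, MonoidHom.coe_fst, MonoidHom.coe_snd]
  constructor
  · intro hk
    exact ⟨⟨(g, h), hk, rfl⟩, ⟨(g, h), hk, rfl⟩⟩
  · rintro ⟨⟨⟨a, b⟩, hab, rfl⟩, ⟨⟨c, d⟩, hcd, rfl⟩⟩
    have h1 := key1 a b hab
    have h2 := key2 c d hcd
    simpa using mul_mem h1 h2
end

section
/- Let G and H be finite groups with coprime orders. Then μ(G × H) = μ(G) + μ(H). -/
noncomputable def minFaithfulDegree (G : Type*) [Group G] : ℕ :=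
  sInf {n : ℕ | ∃ f : G →* Equiv.Perm (Fin n), Function.Injective f}

/-!
A faithful action of `G × H` on `X` restricts to commuting faithful actions of `G` and `H`.
Coprimality makes `G` act faithfully on the set `X/H` of `H`-orbits: if `g • x = h • x`, then
`g ^ |H| • x = h ^ |H| • x = x`, and `g` is a power of `g ^ |H|`. Symmetrically, `H` acts
faithfully on `X/G`, so `μ G + μ H` is at most the number of points of `X/H` moved by `G` plus the
number of points of `X/G` moved by `H`.

Within one `G × H`-orbit every `H`-orbit meets every `G`-orbit, so an orbit made of `a` `H`-orbits
and `b` `G`-orbits has at least `a * b` points. `G` moves those `H`-orbits only if `a ≥ 2`, `H`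
moves those `G`-orbits only if `b ≥ 2`, and `a + b ≤ a * b` when both hold; summing over the
orbits bounds the count above by `|X|`. The reverse inequality comes from the disjoint union of
minimal faithful permutation representations of `G` and `H`.
-/

open Equiv Function MulAction

section Degree

variable (G H : Type*) [Group G] [Group H]

theorem exists_injective_perm_fin_natCard (α : Type*) [MulAction G α] [FaithfulSMul G α]
    [Finite α] : ∃ f : G →* Perm (Fin (Nat.card α)), Injective f :=
  let e := (Finite.equivFin α).permCongrHom
  ⟨e.toMonoidHom.comp (toPermHom G α), e.injective.comp toPerm_injective⟩

theorem minFaithfulDegree_le_natCard (α : Type*) [MulAction G α] [FaithfulSMul G α]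
    [Finite α] : minFaithfulDegree G ≤ Nat.card α :=
  Nat.sInf_le (exists_injective_perm_fin_natCard G α)

theorem exists_injective_minFaithfulDegree [Finite G] :
    ∃ f : G →* Perm (Fin (minFaithfulDegree G)), Injective f :=
  Nat.sInf_mem (s := {n | ∃ f : G →* Perm (Fin n), Injective f})
    ⟨_, exists_injective_perm_fin_natCard G G⟩

theorem minFaithfulDegree_prod_le [Finite G] [Finite H] :
    minFaithfulDegree (G × H) ≤ minFaithfulDegree G + minFaithfulDegree H := by
  obtain ⟨f, hf⟩ := exists_injective_minFaithfulDegree G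
  obtain ⟨f', hf'⟩ := exists_injective_minFaithfulDegree H
  let e := (finSumFinEquiv (m := minFaithfulDegree G) (n := minFaithfulDegree H)).permCongrHom
  refine Nat.sInf_le ⟨e.toMonoidHom.comp ((Perm.sumCongrHom _ _).comp (f.prodMap f')), ?_⟩
  refine e.injective.comp (Perm.sumCongrHom_injective.comp ?_)
  rw [MonoidHom.coe_prodMap]
  exact hf.prodMap hf'

end Degree

theorem Nat.card_eq_sum_card_fiber {α β : Type*} [Finite α] [Fintype β] (f : α → β) :
    Nat.card α = ∑ b, Nat.card {a // f a = b} := by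
  rw [← Nat.card_sigma]
  exact Nat.card_congr (Equiv.sigmaFiberEquiv f).symm

namespace MulAction

section MovedPoints

variable (G α : Type*) [Group G] [MulAction G α]

def movedPoints : SubMulAction G α where
  carrier := {a | ∃ g : G, g • a ≠ a}
  smul_mem' g _ := fun ⟨g', hg'⟩ => ⟨g * g' * g⁻¹, by simpa [mul_smul] using hg'⟩

instance [FaithfulSMul G α] : FaithfulSMul G (movedPoints G α) := by
  refine faithfulSMul_iff.mpr fun g hg => faithfulSMul_iff.mp ‹_› g fun a => ?_
  by_contra h
  exact h (congrArg Subtype.val (hg ⟨a, g, h⟩))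

end MovedPoints

section CommutingActions

variable {G H X : Type*} [Group G] [Group H] [MulAction G X] [MulAction H X]
  [SMulCommClass G H X]

instance orbitRel.Quotient.mulAction : MulAction G (orbitRel.Quotient H X) where
  smul g := Quotient.map (g • ·) fun _ _ ⟨h, hh⟩ => ⟨h, by simp only [← hh, smul_comm]⟩
  one_smul := Quotient.ind fun x => congrArg Quotient.mk'' (one_smul G x)
  mul_smul g₁ g₂ := Quotient.ind fun x => congrArg Quotient.mk'' (mul_smul g₁ g₂ x)

theorem smul_eq_self_of_smul_mem_orbit [Finite G] [Finite H]
    (hcop : (Nat.card G).Coprime (Nat.card H)) {g : G} {x : X} (hx : g • x ∈ orbit H x) :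
    g • x = x := by
  obtain ⟨h, hh⟩ := hx
  have hpow (n : ℕ) : g ^ n • x = h ^ n • x := by
    induction n with
    | zero => simp
    | succ n ih => rw [pow_succ, mul_smul, ← hh, smul_comm, ih, ← mul_smul, ← pow_succ']
  have hfix : g ^ Nat.card H ∈ stabilizer G x := by
    rw [mem_stabilizer_iff, hpow, pow_card_eq_one', one_smul]
  obtain ⟨k, hk⟩ := exists_pow_eq_self_of_coprime
    (hcop.coprime_dvd_left (orderOf_dvd_natCard g)).symm
  rw [← mem_stabilizer_iff, ← hk]
  exact pow_mem hfix k

theorem faithfulSMul_orbitRel_quotient [Finite G] [Finite H] [FaithfulSMul G X]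
    (hcop : (Nat.card G).Coprime (Nat.card H)) : FaithfulSMul G (orbitRel.Quotient H X) :=
  faithfulSMul_iff.mpr fun g hg => faithfulSMul_iff.mp ‹_› g fun x =>
    smul_eq_self_of_smul_mem_orbit hcop (Quotient.exact (hg ⟦x⟧))

theorem card_fiber_movedPoints_eq_zero_or {K R Q : Type*} [Group K] [MulAction K R] [Finite R]
    (π : R → Q) (hπ : ∀ (k : K) r, π (k • r) = π r) (q : Q) :
    Nat.card {r : movedPoints K R // π r = q} = 0 ∨
      Nat.card {r : movedPoints K R // π r = q} ≤ Nat.card {r // π r = q} ∧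
        2 ≤ Nat.card {r // π r = q} := by
  rcases isEmpty_or_nonempty {r : movedPoints K R // π r = q} with h | ⟨⟨⟨r, k, hk⟩, hr⟩⟩
  · exact Or.inl Nat.card_of_isEmpty
  refine Or.inr ⟨Nat.card_le_card_of_injective _ (Subtype.map_injective
    (f := ((↑) : movedPoints K R → R)) (q := (π · = q)) (fun _ => id) Subtype.val_injective), ?_⟩
  have : Nontrivial {r // π r = q} :=
    ⟨⟨k • r, (hπ k r).trans hr⟩, ⟨r, hr⟩, fun h => hk (congrArg Subtype.val h)⟩
  exact Finite.one_lt_card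

section JointOrbits

variable (G H X)

attribute [local instance] prodOfSMulCommClass

theorem prodOfSMulCommClass_smul (p : G × H) (x : X) : p • x = p.1 • p.2 • x :=
  rfl

def jointOrbitOfLeftOrbit : orbitRel.Quotient G X → orbitRel.Quotient (G × H) X :=
  Quotient.map id fun _ _ ⟨g, hg⟩ => ⟨(g, 1), by simpa [prodOfSMulCommClass_smul] using hg⟩

def jointOrbitOfRightOrbit : orbitRel.Quotient H X → orbitRel.Quotient (G × H) X :=
  Quotient.map id fun _ _ ⟨h, hh⟩ => ⟨(1, h), by simpa [prodOfSMulCommClass_smul] using hh⟩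

theorem jointOrbit_mk_smul_left (g : G) (x : X) :
    (⟦g • x⟧ : orbitRel.Quotient (G × H) X) = ⟦x⟧ := by
  simpa [prodOfSMulCommClass_smul] using
    orbitRel.Quotient.quotient_smul_eq (g := (g, (1 : H))) (a := x)

theorem jointOrbit_mk_smul_right (h : H) (x : X) :
    (⟦h • x⟧ : orbitRel.Quotient (G × H) X) = ⟦x⟧ := by
  simpa [prodOfSMulCommClass_smul] using
    orbitRel.Quotient.quotient_smul_eq (g := ((1 : G), h)) (a := x)

theorem jointOrbitOfLeftOrbit_smul [SMulCommClass H G X] (h : H) (c : orbitRel.Quotient G X) :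
    jointOrbitOfLeftOrbit G H X (h • c) = jointOrbitOfLeftOrbit G H X c := by
  induction c using Quotient.ind with | _ x
  exact jointOrbit_mk_smul_right G H X h x

theorem jointOrbitOfRightOrbit_smul (g : G) (r : orbitRel.Quotient H X) :
    jointOrbitOfRightOrbit G H X (g • r) = jointOrbitOfRightOrbit G H X r := by
  induction r using Quotient.ind with | _ x
  exact jointOrbit_mk_smul_left G H X g x

theorem card_fiber_mul_card_fiber_le [Finite X] (q : orbitRel.Quotient (G × H) X) :
    Nat.card {r // jointOrbitOfRightOrbit G H X r = q} *
        Nat.card {c // jointOrbitOfLeftOrbit G H X c = q} ≤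
      Nat.card {x : X // ⟦x⟧ = q} := by
  rw [← Nat.card_prod]
  refine Nat.card_le_card_of_surjective (fun x => (⟨⟦x.1⟧, x.2⟩, ⟨⟦x.1⟧, x.2⟩)) ?_
  rintro ⟨⟨r, hr⟩, ⟨c, hc⟩⟩
  induction r using Quotient.ind with | _ y
  induction c using Quotient.ind with | _ z
  obtain ⟨⟨g, h⟩, hgh⟩ := Quotient.exact (hr.trans hc.symm)
  replace hgh : h • g • z = y := (smul_comm g h z).symm.trans hgh
  refine ⟨⟨g • z, (jointOrbit_mk_smul_left G H X g z).trans hc⟩, ?_⟩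
  ext <;> simp only
  · rw [← hgh]
    exact orbitRel.Quotient.quotient_smul_eq.symm
  · exact orbitRel.Quotient.quotient_smul_eq

theorem card_fiber_movedPoints_add_le [SMulCommClass H G X] [Finite X]
    (q : orbitRel.Quotient (G × H) X) :
    Nat.card {r : movedPoints G (orbitRel.Quotient H X) // jointOrbitOfRightOrbit G H X r = q} +
        Nat.card {c : movedPoints H (orbitRel.Quotient G X) // jointOrbitOfLeftOrbit G H X c = q} ≤
      Nat.card {x : X // ⟦x⟧ = q} := by
  induction q using Quotient.ind with | _ x
  have hrows : 1 ≤ Nat.card {r // jointOrbitOfRightOrbit G H X r = ⟦x⟧} :=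
    Nat.card_pos_iff.mpr ⟨⟨⟨⟦x⟧, rfl⟩⟩, inferInstance⟩
  have hcols : 1 ≤ Nat.card {c // jointOrbitOfLeftOrbit G H X c = ⟦x⟧} :=
    Nat.card_pos_iff.mpr ⟨⟨⟨⟦x⟧, rfl⟩⟩, inferInstance⟩
  have hrect := card_fiber_mul_card_fiber_le G H X ⟦x⟧
  rcases card_fiber_movedPoints_eq_zero_or _ (jointOrbitOfRightOrbit_smul G H X) ⟦x⟧
    with h₁ | ⟨h₁, h₂⟩ <;>
  rcases card_fiber_movedPoints_eq_zero_or _ (jointOrbitOfLeftOrbit_smul G H X) ⟦x⟧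
    with h₃ | ⟨h₃, h₄⟩ <;>
  nlinarith

theorem card_movedPoints_add_card_movedPoints_le [SMulCommClass H G X] [Finite X] :
    Nat.card (movedPoints G (orbitRel.Quotient H X)) +
      Nat.card (movedPoints H (orbitRel.Quotient G X)) ≤ Nat.card X := by
  have := Fintype.ofFinite (orbitRel.Quotient (G × H) X)
  rw [Nat.card_eq_sum_card_fiber (fun r : movedPoints G _ => jointOrbitOfRightOrbit G H X r),
    Nat.card_eq_sum_card_fiber (fun c : movedPoints H _ => jointOrbitOfLeftOrbit G H X c),
    Nat.card_eq_sum_card_fiber (Quotient.mk (orbitRel (G × H) X)), ← Finset.sum_add_distrib]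
  exact Finset.sum_le_sum fun q _ => card_fiber_movedPoints_add_le G H X q

end JointOrbits

end CommutingActions

end MulAction

theorem minFaithfulDegree_add_le_natCard (G H X : Type*) [Group G] [Group H]
    [MulAction G X] [MulAction H X]
    [SMulCommClass G H X] [SMulCommClass H G X] [FaithfulSMul G X] [FaithfulSMul H X]
    [Finite G] [Finite H] [Finite X] (hcop : (Nat.card G).Coprime (Nat.card H)) :
    minFaithfulDegree G + minFaithfulDegree H ≤ Nat.card X := by
  have := faithfulSMul_orbitRel_quotient (H := H) (X := X) hcop
  have := faithfulSMul_orbitRel_quotient (H := G) (X := X) hcop.symm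
  calc minFaithfulDegree G + minFaithfulDegree H
      ≤ Nat.card (movedPoints G (orbitRel.Quotient H X)) +
          Nat.card (movedPoints H (orbitRel.Quotient G X)) :=
        add_le_add (minFaithfulDegree_le_natCard G _) (minFaithfulDegree_le_natCard H _)
    _ ≤ Nat.card X := card_movedPoints_add_card_movedPoints_le G H X

theorem mu_prod_of_coprime (G H : Type*) [Group G] [Group H] [Finite G] [Finite H]
    (hcop : Nat.Coprime (Nat.card G) (Nat.card H)) :
    minFaithfulDegree (G × H) = minFaithfulDegree G + minFaithfulDegree H := by
  refine le_antisymm (minFaithfulDegree_prod_le G H) ?_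
  obtain ⟨F, hF⟩ := exists_injective_minFaithfulDegree (G × H)
  let X := Fin (minFaithfulDegree (G × H))
  let : MulAction G X := .compHom X (F.comp (.inl G H))
  let : MulAction H X := .compHom X (F.comp (.inr G H))
  have : SMulCommClass G H X :=
    ⟨fun g h x => congrArg (· x) ((MonoidHom.commute_inl_inr g h).map F).eq⟩
  have : SMulCommClass H G X := .symm G H X
  have : FaithfulSMul G X := ⟨fun hg => (Prod.ext_iff.mp (hF (Equiv.ext hg))).1⟩
  have : FaithfulSMul H X := ⟨fun hh => (Prod.ext_iff.mp (hF (Equiv.ext hh))).2⟩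
  simpa [X] using minFaithfulDegree_add_le_natCard G H X hcop
end

section
/- Let G be a finite abelian p-group. Then μ(G) = m(G), where m(G) is the sum of the orders of the cyclic factors in the primary decomposition of G. Concretely: if G ≅ ∏_{i=1}^n ZMod (p^{d_i}) with each d_i ≥ 1, then μ(G) = ∑_{i=1}^n p^{d_i}. -/
/-!
The upper bound: each cyclic factor `ZMod (p ^ dᵢ)` acts regularly on its own set of `p ^ dᵢ`
points.

The lower bound: a faithful action of `G` on `N` points splits into orbits `G ⧸ Kω` with
`⨅ Kω = ⊥`, so `G` embeds into `∏ G ⧸ Kω` while `N = ∑ |G ⧸ Kω|`. The invariant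
`m(A) = ∑ₖ wₖ log_p |A ^ p ^ k|`, with weights `wₖ ≥ 0`, is monotone under embeddings (since
`A ^ p ^ k` is), additive on products, and equals `p ^ d` on `ZMod (p ^ d)`. By the structure
theorem, `m(A) ≤ |A|` for every abelian `p`-group `A`, a sum of integers `≥ 2` being at most their
product. Hence `∑ p ^ dᵢ = m(G) ≤ ∑ m(G ⧸ Kω) ≤ ∑ |G ⧸ Kω| = N`.
-/

open Finset

section minFaithfulDegree

variable {G : Type*} [Group G]

lemma exists_injective_perm_fin_card {X : Type*} [Finite X] (f : G →* Equiv.Perm X)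
    (hf : Function.Injective f) :
    ∃ f' : G →* Equiv.Perm (Fin (Nat.card X)), Function.Injective f' :=
  ⟨(Finite.equivFin X).permCongrHom.toMonoidHom.comp f,
    (MulEquiv.injective (Finite.equivFin X).permCongrHom).comp hf⟩

lemma minFaithfulDegree_le_card_of_injective {X : Type*} [Finite X] (f : G →* Equiv.Perm X)
    (hf : Function.Injective f) : minFaithfulDegree G ≤ Nat.card X :=
  Nat.sInf_le (exists_injective_perm_fin_card f hf)

lemma exists_injective_perm_fin_minFaithfulDegree [Finite G] :
    ∃ f : G →* Equiv.Perm (Fin (minFaithfulDegree G)), Function.Injective f :=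
  Nat.sInf_mem (s := {n | ∃ f : G →* Equiv.Perm (Fin n), Function.Injective f})
    ⟨_, exists_injective_perm_fin_card (MulAction.toPermHom G G) MulAction.toPerm_injective⟩

lemma le_minFaithfulDegree [Finite G] {m : ℕ}
    (h : ∀ (X : Type) [MulAction G X] [FaithfulSMul G X] [Finite X], m ≤ Nat.card X) :
    m ≤ minFaithfulDegree G := by
  obtain ⟨f, hf⟩ := exists_injective_perm_fin_minFaithfulDegree (G := G)
  let _ : MulAction G (Fin (minFaithfulDegree G)) := MulAction.compHom _ f
  have : FaithfulSMul G (Fin (minFaithfulDegree G)) := ⟨fun h ↦ hf (Equiv.ext h)⟩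
  simpa using h (Fin (minFaithfulDegree G))

lemma minFaithfulDegree_congr {H : Type*} [Group H] (e : G ≃* H) :
    minFaithfulDegree G = minFaithfulDegree H := by
  refine congrArg sInf (Set.ext fun n ↦ ⟨?_, ?_⟩)
  · rintro ⟨f, hf⟩
    exact ⟨f.comp e.symm.toMonoidHom, hf.comp e.symm.injective⟩
  · rintro ⟨f, hf⟩
    exact ⟨f.comp e.toMonoidHom, hf.comp e.injective⟩

lemma minFaithfulDegree_pi_le {ι : Type*} [Fintype ι] (A : ι → Type*) [∀ i, Group (A i)]
    [∀ i, Finite (A i)] : minFaithfulDegree (∀ i, A i) ≤ ∑ i, Nat.card (A i) := by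
  let f := (Equiv.Perm.sigmaCongrRightHom A).comp
    (MonoidHom.pi fun i ↦ (MulAction.toPermHom (A i) (A i)).comp (Pi.evalMonoidHom A i))
  have hf : Function.Injective f := fun x y hxy ↦ funext fun i ↦
    MulAction.toPerm_injective (congrFun (Equiv.Perm.sigmaCongrRightHom_injective hxy) i)
  simpa [Nat.card_sigma] using minFaithfulDegree_le_card_of_injective f hf

end minFaithfulDegree

namespace MulAction

lemma iInf_stabilizer_out_eq_bot (G X : Type*) [CommGroup G] [MulAction G X]
    [FaithfulSMul G X] : ⨅ ω : Quotient (orbitRel G X), stabilizer G ω.out = ⊥ := by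
  refine (Subgroup.eq_bot_iff_forall _).2 fun g hg ↦ eq_of_smul_eq_smul (α := X) fun x ↦ ?_
  obtain ⟨h, hx⟩ : (Quotient.mk (orbitRel G X) x).out ∈ orbit G x :=
    orbitRel_apply.1 (Quotient.mk_out x)
  have := Subgroup.mem_iInf.1 hg ⟦x⟧
  rw [← hx, stabilizer_smul_eq_stabilizer_map_conj] at this
  simpa using this

lemma sum_index_stabilizer_out (G X : Type*) [Group G] [MulAction G X] [Finite X]
    [Fintype (Quotient (orbitRel G X))] :
    ∑ ω : Quotient (orbitRel G X), (stabilizer G ω.out).index = Nat.card X := by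
  have (ω : Quotient (orbitRel G X)) : Finite (G ⧸ stabilizer G ω.out) :=
    .of_equiv _ (orbitEquivQuotientStabilizer G ω.out)
  simp only [Subgroup.index, ← Nat.card_sigma,
    Nat.card_congr (selfEquivSigmaOrbitsQuotientStabilizer G X)]

end MulAction

lemma Subgroup.card_pi_univ {ι : Type*} [Fintype ι] {A : ι → Type*} [∀ i, Group (A i)]
    (H : ∀ i, Subgroup (A i)) : Nat.card (Subgroup.pi Set.univ H) = ∏ i, Nat.card (H i) := by
  rw [← Nat.card_pi]
  exact Nat.card_congr
    { toFun x i := ⟨x.1 i, x.2 i (Set.mem_univ i)⟩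
      invFun x := ⟨fun i ↦ x i, fun i _ ↦ (x i).2⟩ }

lemma range_powMonoidHom_pi {ι : Type*} {A : ι → Type*} [∀ i, CommGroup (A i)] (n : ℕ) :
    (powMonoidHom n : (∀ i, A i) →* _).range
      = Subgroup.pi Set.univ fun i ↦ (powMonoidHom n : A i →* _).range := by
  ext x
  refine ⟨?_, fun hx ↦ ?_⟩
  · rintro ⟨y, rfl⟩ i -
    exact ⟨y i, rfl⟩
  · choose y hy using fun i ↦ hx i (Set.mem_univ i)
    exact ⟨y, funext hy⟩

lemma sum_le_prod_of_two_le {ι : Type*} (s : Finset ι) {f : ι → ℕ} (hf : ∀ i ∈ s, 2 ≤ f i) :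
    ∑ i ∈ s, f i ≤ ∏ i ∈ s, f i := by
  classical
  induction s using Finset.induction with
  | empty => simp
  | insert a s ha ih =>
    rw [sum_insert ha, prod_insert ha]
    rcases s.eq_empty_or_nonempty with rfl | ⟨j, hj⟩
    · simp
    have hs : 2 ≤ ∏ i ∈ s, f i :=
      (hf j (mem_insert_of_mem hj)).trans
        (single_le_prod' (fun i hi ↦ by linarith [hf i (mem_insert_of_mem hi)]) hj)
    calc f a + ∑ i ∈ s, f i ≤ f a + ∏ i ∈ s, f i :=
          Nat.add_le_add_left (ih fun i hi ↦ hf i (mem_insert_of_mem hi)) _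
      _ ≤ f a * ∏ i ∈ s, f i := add_le_mul (hf a (mem_insert_self a s)) hs

noncomputable def logCardPowRange (p k : ℕ) (G : Type*) [CommGroup G] : ℕ :=
  (Nat.card (powMonoidHom (p ^ k) : G →* G).range).factorization p

section logCardPowRange

variable {p : ℕ}

lemma logCardPowRange_le_of_injective {G H : Type*} [CommGroup G] [CommGroup H] [Finite H]
    {f : G →* H} (hf : Function.Injective f) (k : ℕ) :
    logCardPowRange p k G ≤ logCardPowRange p k H := by
  have hle : (powMonoidHom (p ^ k) : G →* G).range.map f ≤ (powMonoidHom (p ^ k)).range := by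
    rintro _ ⟨_, ⟨g, rfl⟩, rfl⟩
    exact ⟨f g, (map_pow f g _).symm⟩
  have : Finite G := Finite.of_injective f hf
  have hdvd : Nat.card (powMonoidHom (p ^ k) : G →* G).range
      ∣ Nat.card (powMonoidHom (p ^ k) : H →* H).range :=
    Subgroup.card_map_of_injective hf ▸ Subgroup.card_dvd_of_le hle
  exact (Nat.factorization_le_iff_dvd Nat.card_pos.ne' Nat.card_pos.ne').2 hdvd p

lemma logCardPowRange_pi {ι : Type*} [Fintype ι] (A : ι → Type*) [∀ i, CommGroup (A i)]
    [∀ i, Finite (A i)] (k : ℕ) :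
    logCardPowRange p k (∀ i, A i) = ∑ i, logCardPowRange p k (A i) := by
  rw [logCardPowRange, range_powMonoidHom_pi, Subgroup.card_pi_univ,
    Nat.factorization_prod fun i _ ↦ Nat.card_pos.ne', Finsupp.finsetSum_apply]
  rfl

lemma logCardPowRange_of_isCyclic {C : Type*} [CommGroup C] [IsCyclic C] [Finite C]
    (hp : p.Prime) {d : ℕ} (hC : Nat.card C = p ^ d) (k : ℕ) :
    logCardPowRange p k C = d - k := by
  rw [logCardPowRange, IsCyclic.card_powMonoidHom_range, hC]
  rcases le_total k d with h | h
  · rw [Nat.gcd_eq_right (pow_dvd_pow p h), Nat.pow_div h hp.pos, hp.factorization_pow,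
      Finsupp.single_eq_same]
  · rw [Nat.gcd_eq_left (pow_dvd_pow p h), Nat.div_self (pow_pos hp.pos d),
      Nat.sub_eq_zero_of_le h, Nat.factorization_one, Finsupp.zero_apply]

end logCardPowRange

/-- The second differences of `d ↦ p ^ d` (extended by `0` to `d ≤ 0`), so that
`∑ₖ powRangeWeight p k * (d - k) = p ^ d` for `d ≥ 1`. -/
def powRangeWeight (p : ℕ) : ℕ → ℕ
  | 0 => p
  | 1 => p ^ 2 - 2 * p
  | k + 2 => (p - 1) ^ 2 * p ^ (k + 1)

noncomputable def powRangeInvariant (p B : ℕ) (G : Type*) [CommGroup G] : ℕ :=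
  ∑ k ∈ range B, powRangeWeight p k * logCardPowRange p k G

section weights

variable {p : ℕ}

lemma sum_range_powRangeWeight_add_pow (hp : 2 ≤ p) (d : ℕ) :
    ∑ k ∈ range (d + 2), powRangeWeight p k + p ^ (d + 1) = p ^ (d + 2) := by
  have h2p : 2 * p ≤ p ^ 2 := by nlinarith
  induction d with
  | zero => simp [powRangeWeight, sum_range_succ]; omega
  | succ d ih =>
    rw [sum_range_succ, powRangeWeight]
    zify [h2p, (by omega : 1 ≤ p)] at ih ⊢
    linear_combination ih

lemma sum_range_powRangeWeight_mul_sub (hp : 2 ≤ p) (d : ℕ) :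
    ∑ k ∈ range (d + 1), powRangeWeight p k * (d + 1 - k) = p ^ (d + 1) := by
  induction d with
  | zero => simp [powRangeWeight]
  | succ d ih =>
    have hlast : ∑ k ∈ range (d + 2), powRangeWeight p k * (d + 1 - k)
        = ∑ k ∈ range (d + 1), powRangeWeight p k * (d + 1 - k) := by
      simp [sum_range_succ _ (d + 1)]
    have hstep : ∑ k ∈ range (d + 2), powRangeWeight p k * (d + 2 - k)
        = ∑ k ∈ range (d + 2), powRangeWeight p k * (d + 1 - k)
          + ∑ k ∈ range (d + 2), powRangeWeight p k := by
      rw [← sum_add_distrib]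
      refine sum_congr rfl fun k hk ↦ ?_
      rw [show d + 2 - k = d + 1 - k + 1 by grind, mul_add_one]
    have := sum_range_powRangeWeight_add_pow hp d
    rw [hstep, hlast, ih]
    linarith

lemma sum_powRangeWeight_mul_sub {B d : ℕ} (hp : 2 ≤ p) (hd : 1 ≤ d) (hdB : d ≤ B) :
    ∑ k ∈ range B, powRangeWeight p k * (d - k) = p ^ d := by
  obtain ⟨d, rfl⟩ := Nat.exists_eq_add_of_le' hd
  rw [← sum_subset (range_subset_range.2 hdB) fun k _ hk ↦ by simp_all,
    sum_range_powRangeWeight_mul_sub hp]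

end weights

section powRangeInvariant

variable {p B : ℕ}

lemma powRangeInvariant_le_of_injective {G H : Type*} [CommGroup G] [CommGroup H] [Finite H]
    {f : G →* H} (hf : Function.Injective f) :
    powRangeInvariant p B G ≤ powRangeInvariant p B H :=
  sum_le_sum fun k _ ↦ Nat.mul_le_mul_left _ (logCardPowRange_le_of_injective hf k)

lemma powRangeInvariant_pi {ι : Type*} [Fintype ι] (A : ι → Type*) [∀ i, CommGroup (A i)]
    [∀ i, Finite (A i)] :
    powRangeInvariant p B (∀ i, A i) = ∑ i, powRangeInvariant p B (A i) := by
  simp only [powRangeInvariant, logCardPowRange_pi, mul_sum]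
  exact sum_comm

lemma powRangeInvariant_of_isCyclic {C : Type*} [CommGroup C] [IsCyclic C] [Finite C]
    (hp : p.Prime) {d : ℕ} (hC : Nat.card C = p ^ d) (hd : 1 ≤ d) (hdB : d ≤ B) :
    powRangeInvariant p B C = p ^ d := by
  simp only [powRangeInvariant, logCardPowRange_of_isCyclic hp hC]
  exact sum_powRangeWeight_mul_sub hp.two_le hd hdB

lemma powRangeInvariant_le_card {Q : Type*} [CommGroup Q] [Finite Q] (hp : p.Prime)
    (hQ : Monoid.exponent Q ∣ p ^ B) : powRangeInvariant p B Q ≤ Nat.card Q := by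
  obtain ⟨ι, _, m, hm, ⟨e⟩⟩ := CommGroup.equiv_prod_multiplicative_zmod_of_finite Q
  have : ∀ i, NeZero (m i) := fun i ↦ ⟨by have := hm i; omega⟩
  have hcard : ∀ i, Nat.card (Multiplicative (ZMod (m i))) = m i := by simp
  have hexp (i : ι) : ∃ d, 1 ≤ d ∧ d ≤ B ∧ m i = p ^ d := by
    have hdvd : m i ∣ p ^ B := by
      rw [Monoid.exponent_eq_of_mulEquiv e, Monoid.exponent_pi] at hQ
      rw [← hcard, ← IsCyclic.exponent_eq_card]
      exact (dvd_lcm (mem_univ i)).trans hQ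
    obtain ⟨d, hdB, hd⟩ := (Nat.dvd_prime_pow hp).1 hdvd
    exact ⟨d, Nat.pos_of_ne_zero fun h0 ↦ (hm i).ne' (by simp [hd, h0]), hdB, hd⟩
  choose d hd hdB hmd using hexp
  calc powRangeInvariant p B Q
      ≤ powRangeInvariant p B (∀ i, Multiplicative (ZMod (m i))) :=
        powRangeInvariant_le_of_injective (f := e.toMonoidHom) e.injective
    _ = ∑ i, m i := by
        rw [powRangeInvariant_pi]
        refine sum_congr rfl fun i _ ↦ ?_
        rw [powRangeInvariant_of_isCyclic hp ((hcard i).trans (hmd i)) (hd i) (hdB i), hmd]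
    _ ≤ ∏ i, m i := sum_le_prod_of_two_le _ fun i _ ↦ hm i
    _ = Nat.card Q := by simp [Nat.card_congr e.toEquiv, Nat.card_pi]

lemma powRangeInvariant_le_sum_index {G : Type*} [CommGroup G] [Finite G] (hp : p.Prime)
    (hG : Monoid.exponent G ∣ p ^ B) {ι : Type*} [Fintype ι] (K : ι → Subgroup G)
    (hK : ⨅ i, K i = ⊥) : powRangeInvariant p B G ≤ ∑ i, (K i).index := by
  let Φ : G →* ∀ i, G ⧸ K i := MonoidHom.pi fun i ↦ QuotientGroup.mk' (K i)
  have hΦ : Function.Injective Φ := by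
    refine (injective_iff_map_eq_one Φ).2 fun g hg ↦ ?_
    rw [← Subgroup.mem_bot, ← hK, Subgroup.mem_iInf]
    exact fun i ↦ (QuotientGroup.eq_one_iff g).1 (congrFun hg i)
  calc powRangeInvariant p B G ≤ powRangeInvariant p B (∀ i, G ⧸ K i) :=
        powRangeInvariant_le_of_injective hΦ
    _ = ∑ i, powRangeInvariant p B (G ⧸ K i) := powRangeInvariant_pi _
    _ ≤ ∑ i, (K i).index := sum_le_sum fun i _ ↦
        powRangeInvariant_le_card hp ((Group.exponent_quotient_dvd (K i)).trans hG)

lemma powRangeInvariant_le_card_of_faithful {G X : Type*} [CommGroup G] [Finite G]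
    [MulAction G X] [FaithfulSMul G X] [Finite X] (hp : p.Prime)
    (hG : Monoid.exponent G ∣ p ^ B) : powRangeInvariant p B G ≤ Nat.card X := by
  have := Fintype.ofFinite (Quotient (MulAction.orbitRel G X))
  rw [← MulAction.sum_index_stabilizer_out G X]
  exact powRangeInvariant_le_sum_index hp hG _ (MulAction.iInf_stabilizer_out_eq_bot G X)

end powRangeInvariant

theorem mu_abelian_p_group_general (G : Type*) [CommGroup G]
    (p : ℕ) (hp : p.Prime) (n : ℕ) (d : Fin n → ℕ) (hd : ∀ i, 1 ≤ d i)
    (e : G ≃* ∀ i : Fin n, Multiplicative (ZMod (p ^ d i))) :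
    minFaithfulDegree G = ∑ i : Fin n, p ^ d i := by
  have (i : Fin n) : NeZero (p ^ d i) := ⟨pow_ne_zero _ hp.ne_zero⟩
  have hcard (i : Fin n) : Nat.card (Multiplicative (ZMod (p ^ d i))) = p ^ d i := by simp
  set B := ∑ i, d i
  have hdB (i : Fin n) : d i ≤ B := single_le_sum (fun j _ ↦ Nat.zero_le (d j)) (mem_univ i)
  have hexp : Monoid.exponent (∀ i, Multiplicative (ZMod (p ^ d i))) ∣ p ^ B := by
    rw [Monoid.exponent_pi]
    refine lcm_dvd fun i _ ↦ ?_
    rw [IsCyclic.exponent_eq_card, hcard]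
    exact pow_dvd_pow p (hdB i)
  have hinv : powRangeInvariant p B (∀ i, Multiplicative (ZMod (p ^ d i))) = ∑ i, p ^ d i := by
    rw [powRangeInvariant_pi]
    exact sum_congr rfl fun i _ ↦ powRangeInvariant_of_isCyclic hp (hcard i) (hd i) (hdB i)
  rw [minFaithfulDegree_congr e]
  refine le_antisymm ((minFaithfulDegree_pi_le _).trans_eq (sum_congr rfl fun i _ ↦ hcard i))
    (le_minFaithfulDegree fun X _ _ _ ↦ hinv ▸ powRangeInvariant_le_card_of_faithful hp hexp)

theorem mu_abelian_p_group (G : Type*) [CommGroup G] [Finite G]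
    (p : ℕ) (hp : p.Prime) (n : ℕ) (d : Fin n → ℕ) (hd : ∀ i, 1 ≤ d i)
    (e : G ≃* ∀ i : Fin n, Multiplicative (ZMod (p ^ d i))) :
    minFaithfulDegree G = ∑ i : Fin n, p ^ d i :=
  mu_abelian_p_group_general G p hp n d hd e
end

section
/- Every finite group G has a minimal-degree faithful permutation representation given by a finite multiset of subgroups {G_1, ..., G_n} with trivial intersection of their normal cores, of total index ∑[G:G_i] = μ(G), such that each G_i is meet-irreducible in the subgroup lattice of G (i.e., G_i = K ⊓ L implies G_i = K or G_i = L for subgroups K, L of G). -/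
/-- `permCongr` as a monoid hom. -/
def permHomOfEquiv {α β : Type*} (e : α ≃ β) : Equiv.Perm α →* Equiv.Perm β where
  toFun p := e.permCongr p
  map_one' := by ext x; simp [Equiv.permCongr_def]
  map_mul' p q := by ext x; simp [Equiv.permCongr_def]

lemma permHomOfEquiv_injective {α β : Type*} (e : α ≃ β) :
    Function.Injective (permHomOfEquiv e) := e.permCongr.injective

lemma min_le_of_inj {G : Type*} [Group G] {α : Type*} [Finite α]
    (f : G →* Equiv.Perm α) (hf : Function.Injective f) :
    minFaithfulDegree G ≤ Nat.card α := by
  apply Nat.sInf_le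
  exact ⟨(permHomOfEquiv (Finite.equivFin α)).comp f,
    (permHomOfEquiv_injective _).comp hf⟩

lemma lemA {G : Type*} [Group G] [Finite G] (R : Multiset (Subgroup G))
    (h : (R.map fun H => H.normalCore).inf = ⊥) :
    minFaithfulDegree G ≤ (R.map fun H => H.index).sum := by
  classical
  obtain ⟨l, rfl⟩ : ∃ l : List (Subgroup G), (l : Multiset (Subgroup G)) = R :=
    ⟨R.toList, R.coe_toList⟩
  set X := (i : Fin l.length) × (G ⧸ l.get i) with hX
  have hle : (MulAction.toPermHom G X).ker ≤
      ((l : Multiset (Subgroup G)).map fun H => H.normalCore).inf := by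
    refine Multiset.le_inf.mpr ?_
    intro C hC
    obtain ⟨H, hH, rfl⟩ := Multiset.mem_map.mp hC
    obtain ⟨i, rfl⟩ := List.mem_iff_get.mp (Multiset.mem_coe.mp hH)
    rw [Subgroup.normalCore_eq_ker]
    intro g hg
    simp only [MonoidHom.mem_ker] at hg ⊢
    ext q
    have hx : g • (⟨i, q⟩ : X) = ⟨i, q⟩ := Equiv.Perm.ext_iff.mp hg ⟨i, q⟩
    rw [Sigma.smul_mk] at hx
    have : g • q = q := eq_of_heq (Sigma.mk.inj_iff.mp hx).2
    simpa using this
  rw [h, le_bot_iff] at hle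
  have hinj : Function.Injective (MulAction.toPermHom G X) :=
    (MonoidHom.ker_eq_bot_iff _).mp hle
  have hcard : Nat.card X = ((l : Multiset (Subgroup G)).map fun H => H.index).sum := by
    letI : ∀ i : Fin l.length, Fintype (G ⧸ l.get i) := fun i => Fintype.ofFinite _
    rw [Nat.card_eq_fintype_card, Fintype.card_sigma]
    rw [Multiset.map_coe, Multiset.sum_coe]
    conv_rhs => rw [← List.ofFn_get l, List.map_ofFn]
    rw [List.sum_ofFn]
    congr 1
    ext i
    rw [Function.comp_apply, Subgroup.index, Nat.card_eq_fintype_card]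
  exact hcard ▸ min_le_of_inj _ hinj

lemma exists_faithful (G : Type*) [Group G] [Finite G] :
    ∃ f : G →* Equiv.Perm (Fin (minFaithfulDegree G)), Function.Injective f := by
  have hne : {n : ℕ | ∃ f : G →* Equiv.Perm (Fin n), Function.Injective f}.Nonempty := by
    refine ⟨Nat.card G, (permHomOfEquiv (Finite.equivFin G)).comp (MulAction.toPermHom G G),
      (permHomOfEquiv_injective _).comp ?_⟩
    intro a b hab
    have := Equiv.Perm.ext_iff.mp hab 1
    simpa using this
  exact Nat.sInf_mem hne

lemma lemB (G : Type*) [Group G] [Finite G] :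
    ∃ R : Multiset (Subgroup G),
      (R.map fun H => H.normalCore).inf = ⊥ ∧
      (R.map fun H => H.index).sum = minFaithfulDegree G := by
  classical
  obtain ⟨f, hf⟩ := exists_faithful G
  letI : MulAction G (Fin (minFaithfulDegree G)) := MulAction.compHom _ f
  have hsmul : ∀ (g : G) (x : Fin (minFaithfulDegree G)), g • x = f g x := fun _ _ => rfl
  letI : Fintype (MulAction.orbitRel.Quotient G (Fin (minFaithfulDegree G))) :=
    Fintype.ofFinite _
  set Ω := MulAction.orbitRel.Quotient G (Fin (minFaithfulDegree G)) with hΩ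
  refine ⟨(Finset.univ : Finset Ω).val.map (fun ω => MulAction.stabilizer G ω.out), ?_, ?_⟩
  · rw [eq_bot_iff]
    intro g hg
    have hcore : ∀ ω : Ω, g ∈ (MulAction.stabilizer G ω.out).normalCore := by
      intro ω
      have hmem : (MulAction.stabilizer G ω.out).normalCore ∈
          ((Finset.univ : Finset Ω).val.map (fun ω => MulAction.stabilizer G ω.out)).map
            (fun H => H.normalCore) :=
        Multiset.mem_map.mpr ⟨MulAction.stabilizer G ω.out,
          Multiset.mem_map.mpr ⟨ω, Finset.mem_univ_val _, rfl⟩, rfl⟩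
      exact Multiset.inf_le hmem hg
    have hfix : ∀ x : Fin (minFaithfulDegree G), g • x = x := by
      intro x
      set ω : Ω := Quotient.mk'' x with hω
      have hmem : x ∈ MulAction.orbit G (Quotient.out ω) := by
        rw [← MulAction.orbitRel.Quotient.orbit_eq_orbit_out ω Quotient.out_eq',
          MulAction.orbitRel.Quotient.mem_orbit]
      obtain ⟨h, hh⟩ := hmem
      have hh : h • Quotient.out ω = x := hh
      have hst : (h⁻¹ * g * h) • Quotient.out ω = Quotient.out ω := by
        simpa [MulAction.mem_stabilizer_iff] using hcore ω h⁻¹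
      rw [← hh, smul_smul, show g * h = h * (h⁻¹ * g * h) by group, mul_smul, hst]
    have : f g = 1 := by
      refine Equiv.ext fun x => ?_
      simpa [hsmul] using hfix x
    rw [show g = 1 from hf (by simpa using this)]
    exact Subgroup.one_mem _
  · rw [Multiset.map_map]
    letI : ∀ ω : Ω, Fintype (G ⧸ MulAction.stabilizer G (Quotient.out ω)) :=
      fun _ => Fintype.ofFinite _
    have key : Fintype.card (Fin (minFaithfulDegree G))
        = ∑ ω : Ω, Fintype.card (G ⧸ MulAction.stabilizer G (Quotient.out ω)) := by
      rw [Fintype.card_congr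
        (MulAction.selfEquivSigmaOrbitsQuotientStabilizer G (Fin (minFaithfulDegree G))),
        Fintype.card_sigma]
    have h1 : (Multiset.map ((fun H => H.index) ∘ fun ω => MulAction.stabilizer G (Quotient.out ω))
        (Finset.univ : Finset Ω).val).sum
        = ∑ ω : Ω, (MulAction.stabilizer G (Quotient.out ω)).index := rfl
    rw [h1]
    have h2 : ∀ ω : Ω, (MulAction.stabilizer G (Quotient.out ω)).index
        = Fintype.card (G ⧸ MulAction.stabilizer G (Quotient.out ω)) := fun ω => by
      rw [Subgroup.index, Nat.card_eq_fintype_card]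
    simp_rw [h2]
    rw [← key, Fintype.card_fin]

lemma two_mul_index_le {G : Type*} [Group G] [Finite G] {H K : Subgroup G} (h : H < K) :
    2 * K.index ≤ H.index := by
  have hr := Subgroup.relIndex_mul_index h.le
  have h1 : H.relIndex K ≠ 1 := fun hc => h.not_ge (Subgroup.relIndex_eq_one.mp hc)
  have h0 : H.relIndex K ≠ 0 := by
    rw [Subgroup.relIndex]
    exact Subgroup.index_ne_zero_of_finite
  have : 2 ≤ H.relIndex K := by omega
  calc 2 * K.index ≤ H.relIndex K * K.index := Nat.mul_le_mul_right _ this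
    _ = H.index := hr

lemma index_pos {G : Type*} [Group G] [Finite G] (K : Subgroup G) : 0 < K.index :=
  Nat.pos_of_ne_zero Subgroup.index_ne_zero_of_finite

lemma main_aux (G : Type*) [Group G] [Finite G] :
    ∀ n : ℕ, ∀ R : Multiset (Subgroup G),
      (R.map fun H => H.index ^ 2).sum = n →
      (R.map fun H => H.normalCore).inf = ⊥ →
      (R.map fun H => H.index).sum = minFaithfulDegree G →
      ∃ R' : Multiset (Subgroup G),
        (R'.map fun H => H.normalCore).inf = ⊥ ∧
        (R'.map fun H => H.index).sum = minFaithfulDegree G ∧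
        ∀ H ∈ R', ∀ K L : Subgroup G, H = K ⊓ L → H = K ∨ H = L := by
  intro n
  induction n using Nat.strong_induction_on with
  | _ n ih =>
    intro R hm hinf hsum
    classical
    by_cases hirr : ∀ H ∈ R, ∀ K L : Subgroup G, H = K ⊓ L → H = K ∨ H = L
    · exact ⟨R, hinf, hsum, hirr⟩
    · push_neg at hirr
      obtain ⟨H, hHR, K, L, hKL, hK, hL⟩ := hirr
      have hHK : H < K := lt_of_le_of_ne (hKL ▸ inf_le_left) hK
      have hHL : H < L := lt_of_le_of_ne (hKL ▸ inf_le_right) hL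
      set R' : Multiset (Subgroup G) := K ::ₘ L ::ₘ R.erase H with hR'
      have hR : R = H ::ₘ R.erase H := (Multiset.cons_erase hHR).symm
      have hcore : K.normalCore ⊓ L.normalCore ≤ H.normalCore := by
        intro g hg
        obtain ⟨h1, h2⟩ := Subgroup.mem_inf.mp hg
        intro b
        rw [hKL]
        exact Subgroup.mem_inf.mpr ⟨h1 b, h2 b⟩
      have hinf' : (R'.map fun H => H.normalCore).inf = ⊥ := by
        rw [eq_bot_iff, ← hinf, hR]
        simp only [hR', Multiset.map_cons, Multiset.inf_cons]
        refine le_inf (le_trans ?_ hcore) (le_trans inf_le_right inf_le_right)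
        exact le_inf inf_le_left (le_trans inf_le_right inf_le_left)
      have h2K : 2 * K.index ≤ H.index := two_mul_index_le hHK
      have h2L : 2 * L.index ≤ H.index := two_mul_index_le hHL
      have hKpos := index_pos K
      have hLpos := index_pos L
      have hsum'le : (R'.map fun H => H.index).sum ≤ (R.map fun H => H.index).sum := by
        rw [hR, hR']
        simp only [Multiset.map_cons, Multiset.sum_cons]
        omega
      have hsum' : (R'.map fun H => H.index).sum = minFaithfulDegree G :=
        le_antisymm (hsum ▸ hsum'le) (lemA R' hinf')
      have hmlt : (R'.map fun H => H.index ^ 2).sum < n := by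
        rw [← hm, hR, hR']
        simp only [Multiset.map_cons, Multiset.sum_cons]
        have : K.index ^ 2 + L.index ^ 2 < H.index ^ 2 := by nlinarith
        omega
      exact ih _ hmlt R' rfl hinf' hsum'

theorem exists_min_rep_meet_irreducible (G : Type*) [Group G] [Finite G] :
    ∃ R : Multiset (Subgroup G),
      (R.map fun H => H.normalCore).inf = ⊥ ∧
      (R.map fun H => H.index).sum = minFaithfulDegree G ∧
      ∀ H ∈ R, ∀ K L : Subgroup G, H = K ⊓ L → H = K ∨ H = L := by
  obtain ⟨R, h1, h2⟩ := lemB G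
  exact main_aux G _ R rfl h1 h2
end

section
/- For nontrivial finite groups G and H and any semidirect product G ⋊_φ H (with φ : H → Aut(G)), μ(G ⋊_φ H) ≤ |G| + μ(H). In fact, G ⋊_φ H embeds into Equiv.Perm G × H via (g₀, h₀) ↦ ((g ↦ g₀ · φ(h₀)(g)), h₀). -/
/-- `Equiv.permCongr` as a monoid hom. -/
def permCongrHom {α β : Type*} (e : α ≃ β) : Equiv.Perm α →* Equiv.Perm β where
  toFun := e.permCongr
  map_one' := by ext b; simp
  map_mul' p q := by ext b; simp

lemma permCongrHom_injective {α β : Type*} (e : α ≃ β) :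
    Function.Injective (permCongrHom e) := (e.permCongr).injective

lemma minFaithfulDegree_mem (K : Type*) [Group K] [Finite K] :
    minFaithfulDegree K ∈ {n : ℕ | ∃ f : K →* Equiv.Perm (Fin n), Function.Injective f} := by
  apply Nat.sInf_mem
  have e : K ≃ Fin (Nat.card K) := Finite.equivFin K |>.trans (finCongr (by simp [Nat.card_eq_fintype_card, Fintype.card_fin, Fintype.card_eq_nat_card]))
  refine ⟨Nat.card K, (permCongrHom e).comp (MulAction.toPermHom K K), ?_⟩
  exact (permCongrHom_injective e).comp (fun a b hab => by
    simpa using congrFun (congrArg (fun p : Equiv.Perm K => (p : K → K)) hab) 1)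

theorem mu_semidirect_le (G H : Type*) [Group G] [Group H] [Finite G] [Finite H]
    [Nontrivial G] [Nontrivial H] (φ : H →* MulAut G) :
    minFaithfulDegree (G ⋊[φ] H) ≤ Nat.card G + minFaithfulDegree H ∧
    ∃ f : G ⋊[φ] H →* Equiv.Perm G × H, Function.Injective f ∧
      ∀ x : G ⋊[φ] H, f x = (((φ x.right).toEquiv).trans (Equiv.mulLeft x.left), x.right) := by
  -- the embedding into Perm G × H
  set f : G ⋊[φ] H →* Equiv.Perm G × H :=
    { toFun := fun x => (((φ x.right).toEquiv).trans (Equiv.mulLeft x.left), x.right)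
      map_one' := by ext g <;> simp
      map_mul' := by
        intro x y
        ext g
        · simp [mul_assoc]
        · rfl } with hf
  have hfinj : Function.Injective f := by
    intro x y hxy
    have h2 : x.right = y.right := congrArg Prod.snd hxy
    have h1 : x.left * (φ x.right) 1 = y.left * (φ y.right) 1 :=
      congrFun (congrArg (fun p : Equiv.Perm G => (p : G → G)) (congrArg Prod.fst hxy)) 1
    simp only [map_one, mul_one] at h1
    exact SemidirectProduct.ext h1 h2
  refine ⟨?_, f, hfinj, fun x => rfl⟩
  -- bound
  obtain ⟨e2, he2⟩ := minFaithfulDegree_mem H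
  -- Perm G →* Perm (Fin (Nat.card G))
  have eG : G ≃ Fin (Nat.card G) := Finite.equivFin G |>.trans (finCongr (by simp [Fintype.card_eq_nat_card]))
  set e1 : Equiv.Perm G →* Equiv.Perm (Fin (Nat.card G)) := permCongrHom eG
  set big : G ⋊[φ] H →* Equiv.Perm (Fin (Nat.card G + minFaithfulDegree H)) :=
    (permCongrHom finSumFinEquiv).comp
      ((Equiv.Perm.sumCongrHom (Fin (Nat.card G)) (Fin (minFaithfulDegree H))).comp
        ((e1.prodMap e2).comp f))
  have hbig : Function.Injective big := by
    apply (permCongrHom_injective finSumFinEquiv).comp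
    apply Equiv.Perm.sumCongrHom_injective.comp
    rw [MonoidHom.coe_comp]
    apply Function.Injective.comp _ hfinj
    show Function.Injective (Prod.map ⇑e1 ⇑e2)
    exact Prod.map_injective.2 ⟨permCongrHom_injective eG, he2⟩
  exact Nat.sInf_le ⟨big, hbig⟩
end
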